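/- arXiv:2512.06367 — 2 statements merged into one kernel-verified Lean document; each statement's English description precedes it below -/
import Mathlib

section
/- Let G be a P10-free graph with all induced odd cycles of length 7 and no comparable pair, C an induced 7-cycle with sets A_i, B_i. Let X be the set of vertices at distance 2 from C with no neighbor at distance ≥ 2 from C other than themselves (isolated vertices of G − N[C]). Then for every x ∈ X there exists i (mod 7) with N(x) ⊆ A_{i-2} ∪ B_{i-1} ∪ B_{i+1} ∪ A_{i+2}. -/
open SimpleGraph

/-- `c` lists the vertices of an induced cycle of length `n` in `G`:
the map is injective and adjacency holds exactly between consecutive vertices. -/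
def IsInducedCycle {V : Type*} (G : SimpleGraph V) (n : ℕ) (c : ZMod n → V) : Prop :=
  Function.Injective c ∧ ∀ i j, G.Adj (c i) (c j) ↔ (i = j + 1 ∨ j = i + 1)

def HasInducedCycle {V : Type*} (G : SimpleGraph V) (n : ℕ) : Prop :=
  ∃ c : ZMod n → V, IsInducedCycle G n c

/-- `G` contains an induced path on `n` vertices. -/
def HasInducedPath {V : Type*} (G : SimpleGraph V) (n : ℕ) : Prop :=
  ∃ p : Fin n → V, Function.Injective p ∧
    ∀ i j, G.Adj (p i) (p j) ↔ (i.val + 1 = j.val ∨ j.val + 1 = i.val)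

/-- no pair of distinct non-adjacent vertices with comparable neighborhoods. -/
def NoComparablePair {V : Type*} (G : SimpleGraph V) : Prop :=
  ∀ u v : V, u ≠ v → ¬ G.Adj u v →
    ¬ (G.neighborSet u ⊆ G.neighborSet v ∨ G.neighborSet v ⊆ G.neighborSet u)

/-- every induced odd cycle of `G` has length 7. -/
def OddCyclesAre7 {V : Type*} (G : SimpleGraph V) : Prop :=
  ∀ n : ℕ, 3 ≤ n → Odd n → HasInducedCycle G n → n = 7

/-- distance from a vertex to an (induced) 7-cycle given by `c`. -/
noncomputable def distToCycle {V : Type*} (G : SimpleGraph V) (c : ZMod 7 → V) (x : V) : ℕ :=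
  sInf {d : ℕ | ∃ i : ZMod 7, G.dist x (c i) = d}

/-- `A_i`: vertices whose neighborhood on the cycle is exactly `{c i}`. -/
def Aset {V : Type*} (G : SimpleGraph V) (c : ZMod 7 → V) (i : ZMod 7) : Set V :=
  {x | G.neighborSet x ∩ Set.range c = {c i}}

/-- `B_i`: vertices whose neighborhood on the cycle is exactly `{c (i-1), c (i+1)}`. -/
def Bset {V : Type*} (G : SimpleGraph V) (c : ZMod 7 → V) (i : ZMod 7) : Set V :=
  {x | G.neighborSet x ∩ Set.range c = {c (i - 1), c (i + 1)}}

/-- the closed neighborhood `N[C]` of the cycle. -/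
def closedNbhd {V : Type*} (G : SimpleGraph V) (c : ZMod 7 → V) : Set V :=
  Set.range c ∪ {x | ∃ i : ZMod 7, G.Adj x (c i)}

lemma inducedCycle_of_adj {V : Type*} {G : SimpleGraph V} {n : ℕ} (f : ZMod n → V)
    (h4 : (4 : ZMod n) ≠ 0)
    (hadj : ∀ i j, G.Adj (f i) (f j) ↔ (i = j + 1 ∨ j = i + 1)) :
    IsInducedCycle G n f := by
  refine ⟨?_, hadj⟩
  intro i j hij
  by_contra hne
  have h1 : G.Adj (f (i+1)) (f j) := by
    rw [← hij]; exact (hadj (i+1) i).2 (Or.inl rfl)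
  have h2 : G.Adj (f (j+1)) (f i) := by
    rw [hij]; exact (hadj (j+1) j).2 (Or.inl rfl)
  rcases (hadj _ _).1 h1 with h | h
  · exact hne (add_right_cancel h)
  · rcases (hadj _ _).1 h2 with h' | h'
    · exact hne (add_right_cancel h').symm
    · have e : i = i + 1 + 1 + 1 + 1 := h'.trans (by rw [h])
      exact h4 (by linear_combination -e)

def zmod3_cases {P : ZMod 3 → Prop} (h0 : P 0) (h1 : P 1) (h2 : P 2) : ∀ i, P i
  | ⟨0, _⟩ => h0
  | ⟨1, _⟩ => h1
  | ⟨2, _⟩ => h2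

lemma noC3 {V : Type*} {G : SimpleGraph V} (hodd : OddCyclesAre7 G)
    {v0 v1 v2 : V}
    (a01 : G.Adj v0 v1) (a12 : G.Adj v1 v2) (a20 : G.Adj v2 v0)
    : False := by
  have a10 := a01.symm
  have a21 := a12.symm
  have a02 := a20.symm
  have hcyc : HasInducedCycle G 3 := by
    refine ⟨fun i : ZMod 3 => if i.val = 0 then v0 else if i.val = 1 then v1 else v2, inducedCycle_of_adj _ (by decide) ?_⟩
    refine zmod3_cases ?_ ?_ ?_ <;> refine zmod3_cases ?_ ?_ ?_ <;>
      first
        | exact iff_of_true (by assumption) (by decide)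
        | exact iff_of_false (by first | exact G.irrefl | assumption) (by decide)
  exact absurd (hodd 3 (by norm_num) (Nat.odd_iff.mpr rfl) hcyc) (by norm_num)

def zmod5_cases {P : ZMod 5 → Prop} (h0 : P 0) (h1 : P 1) (h2 : P 2) (h3 : P 3) (h4 : P 4) : ∀ i, P i
  | ⟨0, _⟩ => h0
  | ⟨1, _⟩ => h1
  | ⟨2, _⟩ => h2
  | ⟨3, _⟩ => h3
  | ⟨4, _⟩ => h4

lemma noC5 {V : Type*} {G : SimpleGraph V} (hodd : OddCyclesAre7 G)
    {v0 v1 v2 v3 v4 : V}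
    (a01 : G.Adj v0 v1) (a12 : G.Adj v1 v2) (a23 : G.Adj v2 v3)
    (a34 : G.Adj v3 v4) (a40 : G.Adj v4 v0) (n0_2 : ¬ G.Adj v0 v2)
    (n0_3 : ¬ G.Adj v0 v3) (n1_3 : ¬ G.Adj v1 v3) (n1_4 : ¬ G.Adj v1 v4)
    (n2_4 : ¬ G.Adj v2 v4)
    : False := by
  have a10 := a01.symm
  have a21 := a12.symm
  have a32 := a23.symm
  have a43 := a34.symm
  have a04 := a40.symm
  have n2_0 : ¬ G.Adj v2 v0 := fun h => n0_2 h.symm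
  have n3_0 : ¬ G.Adj v3 v0 := fun h => n0_3 h.symm
  have n3_1 : ¬ G.Adj v3 v1 := fun h => n1_3 h.symm
  have n4_1 : ¬ G.Adj v4 v1 := fun h => n1_4 h.symm
  have n4_2 : ¬ G.Adj v4 v2 := fun h => n2_4 h.symm
  have hcyc : HasInducedCycle G 5 := by
    refine ⟨fun i : ZMod 5 => if i.val = 0 then v0 else if i.val = 1 then v1 else if i.val = 2 then v2 else if i.val = 3 then v3 else v4, inducedCycle_of_adj _ (by decide) ?_⟩
    refine zmod5_cases ?_ ?_ ?_ ?_ ?_ <;> refine zmod5_cases ?_ ?_ ?_ ?_ ?_ <;>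
      first
        | exact iff_of_true (by assumption) (by decide)
        | exact iff_of_false (by first | exact G.irrefl | assumption) (by decide)
  exact absurd (hodd 5 (by norm_num) (Nat.odd_iff.mpr rfl) hcyc) (by norm_num)

def zmod9_cases {P : ZMod 9 → Prop} (h0 : P 0) (h1 : P 1) (h2 : P 2) (h3 : P 3) (h4 : P 4) (h5 : P 5) (h6 : P 6) (h7 : P 7) (h8 : P 8) : ∀ i, P i
  | ⟨0, _⟩ => h0
  | ⟨1, _⟩ => h1
  | ⟨2, _⟩ => h2
  | ⟨3, _⟩ => h3
  | ⟨4, _⟩ => h4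
  | ⟨5, _⟩ => h5
  | ⟨6, _⟩ => h6
  | ⟨7, _⟩ => h7
  | ⟨8, _⟩ => h8

lemma noC9 {V : Type*} {G : SimpleGraph V} (hodd : OddCyclesAre7 G)
    {v0 v1 v2 v3 v4 v5 v6 v7 v8 : V}
    (a01 : G.Adj v0 v1) (a12 : G.Adj v1 v2) (a23 : G.Adj v2 v3)
    (a34 : G.Adj v3 v4) (a45 : G.Adj v4 v5) (a56 : G.Adj v5 v6)
    (a67 : G.Adj v6 v7) (a78 : G.Adj v7 v8) (a80 : G.Adj v8 v0)
    (n0_2 : ¬ G.Adj v0 v2) (n0_3 : ¬ G.Adj v0 v3) (n0_4 : ¬ G.Adj v0 v4)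
    (n0_5 : ¬ G.Adj v0 v5) (n0_6 : ¬ G.Adj v0 v6) (n0_7 : ¬ G.Adj v0 v7)
    (n1_3 : ¬ G.Adj v1 v3) (n1_4 : ¬ G.Adj v1 v4) (n1_5 : ¬ G.Adj v1 v5)
    (n1_6 : ¬ G.Adj v1 v6) (n1_7 : ¬ G.Adj v1 v7) (n1_8 : ¬ G.Adj v1 v8)
    (n2_4 : ¬ G.Adj v2 v4) (n2_5 : ¬ G.Adj v2 v5) (n2_6 : ¬ G.Adj v2 v6)
    (n2_7 : ¬ G.Adj v2 v7) (n2_8 : ¬ G.Adj v2 v8) (n3_5 : ¬ G.Adj v3 v5)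
    (n3_6 : ¬ G.Adj v3 v6) (n3_7 : ¬ G.Adj v3 v7) (n3_8 : ¬ G.Adj v3 v8)
    (n4_6 : ¬ G.Adj v4 v6) (n4_7 : ¬ G.Adj v4 v7) (n4_8 : ¬ G.Adj v4 v8)
    (n5_7 : ¬ G.Adj v5 v7) (n5_8 : ¬ G.Adj v5 v8) (n6_8 : ¬ G.Adj v6 v8)
    : False := by
  have a10 := a01.symm
  have a21 := a12.symm
  have a32 := a23.symm
  have a43 := a34.symm
  have a54 := a45.symm
  have a65 := a56.symm
  have a76 := a67.symm
  have a87 := a78.symm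
  have a08 := a80.symm
  have n2_0 : ¬ G.Adj v2 v0 := fun h => n0_2 h.symm
  have n3_0 : ¬ G.Adj v3 v0 := fun h => n0_3 h.symm
  have n4_0 : ¬ G.Adj v4 v0 := fun h => n0_4 h.symm
  have n5_0 : ¬ G.Adj v5 v0 := fun h => n0_5 h.symm
  have n6_0 : ¬ G.Adj v6 v0 := fun h => n0_6 h.symm
  have n7_0 : ¬ G.Adj v7 v0 := fun h => n0_7 h.symm
  have n3_1 : ¬ G.Adj v3 v1 := fun h => n1_3 h.symm
  have n4_1 : ¬ G.Adj v4 v1 := fun h => n1_4 h.symm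
  have n5_1 : ¬ G.Adj v5 v1 := fun h => n1_5 h.symm
  have n6_1 : ¬ G.Adj v6 v1 := fun h => n1_6 h.symm
  have n7_1 : ¬ G.Adj v7 v1 := fun h => n1_7 h.symm
  have n8_1 : ¬ G.Adj v8 v1 := fun h => n1_8 h.symm
  have n4_2 : ¬ G.Adj v4 v2 := fun h => n2_4 h.symm
  have n5_2 : ¬ G.Adj v5 v2 := fun h => n2_5 h.symm
  have n6_2 : ¬ G.Adj v6 v2 := fun h => n2_6 h.symm
  have n7_2 : ¬ G.Adj v7 v2 := fun h => n2_7 h.symm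
  have n8_2 : ¬ G.Adj v8 v2 := fun h => n2_8 h.symm
  have n5_3 : ¬ G.Adj v5 v3 := fun h => n3_5 h.symm
  have n6_3 : ¬ G.Adj v6 v3 := fun h => n3_6 h.symm
  have n7_3 : ¬ G.Adj v7 v3 := fun h => n3_7 h.symm
  have n8_3 : ¬ G.Adj v8 v3 := fun h => n3_8 h.symm
  have n6_4 : ¬ G.Adj v6 v4 := fun h => n4_6 h.symm
  have n7_4 : ¬ G.Adj v7 v4 := fun h => n4_7 h.symm
  have n8_4 : ¬ G.Adj v8 v4 := fun h => n4_8 h.symm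
  have n7_5 : ¬ G.Adj v7 v5 := fun h => n5_7 h.symm
  have n8_5 : ¬ G.Adj v8 v5 := fun h => n5_8 h.symm
  have n8_6 : ¬ G.Adj v8 v6 := fun h => n6_8 h.symm
  have hcyc : HasInducedCycle G 9 := by
    refine ⟨fun i : ZMod 9 => if i.val = 0 then v0 else if i.val = 1 then v1 else if i.val = 2 then v2 else if i.val = 3 then v3 else if i.val = 4 then v4 else if i.val = 5 then v5 else if i.val = 6 then v6 else if i.val = 7 then v7 else v8, inducedCycle_of_adj _ (by decide) ?_⟩
    refine zmod9_cases ?_ ?_ ?_ ?_ ?_ ?_ ?_ ?_ ?_ <;> refine zmod9_cases ?_ ?_ ?_ ?_ ?_ ?_ ?_ ?_ ?_ <;>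
      first
        | exact iff_of_true (by assumption) (by decide)
        | exact iff_of_false (by first | exact G.irrefl | assumption) (by decide)
  exact absurd (hodd 9 (by norm_num) (Nat.odd_iff.mpr rfl) hcyc) (by norm_num)
lemma exAA1 {V : Type*} {G : SimpleGraph V} (hodd : OddCyclesAre7 G)
    {c : ZMod 7 → V} (hc : IsInducedCycle G 7 c) {x w1 w2 : V}
    (hxn : ∀ i, ¬ G.Adj x (c i)) (hw1 : G.Adj x w1) (hw2 : G.Adj x w2)
    (hn12 : ¬ G.Adj w1 w2) (a : ZMod 7)
    (h1 : ∀ j, G.Adj w1 (c j) ↔ j = a)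
    (h2 : ∀ j, G.Adj w2 (c j) ↔ j = a + 1) : False :=
  noC5 hodd
    hw1
    ((h1 _).2 rfl)
    ((hc.2 _ _).2 (Or.inr ((by decide : ∀ t : ZMod 7, t + 1 = t + 1) a)))
    ((h2 _).2 rfl).symm
    hw2.symm
    (hxn a)
    (hxn (a + 1))
    (fun hh => (by decide : ∀ t : ZMod 7, ¬(t + 1 = t)) a ((h1 _).1 hh))
    hn12
    (fun hh => (by decide : ∀ t : ZMod 7, ¬(t = t + 1)) a ((h2 _).1 hh.symm))

lemma exAA2 {V : Type*} {G : SimpleGraph V} (hodd : OddCyclesAre7 G)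
    {c : ZMod 7 → V} (hc : IsInducedCycle G 7 c) {x w1 w2 : V}
    (hxn : ∀ i, ¬ G.Adj x (c i)) (hw1 : G.Adj x w1) (hw2 : G.Adj x w2)
    (hn12 : ¬ G.Adj w1 w2) (a : ZMod 7)
    (h1 : ∀ j, G.Adj w1 (c j) ↔ j = a)
    (h2 : ∀ j, G.Adj w2 (c j) ↔ j = a + 2) : False :=
  noC9 hodd
    hw1
    ((h1 _).2 rfl)
    ((hc.2 _ _).2 (Or.inl ((by decide : ∀ t : ZMod 7, t = t + 6 + 1) a)))
    ((hc.2 _ _).2 (Or.inl ((by decide : ∀ t : ZMod 7, t + 6 = t + 5 + 1) a)))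
    ((hc.2 _ _).2 (Or.inl ((by decide : ∀ t : ZMod 7, t + 5 = t + 4 + 1) a)))
    ((hc.2 _ _).2 (Or.inl ((by decide : ∀ t : ZMod 7, t + 4 = t + 3 + 1) a)))
    ((hc.2 _ _).2 (Or.inl ((by decide : ∀ t : ZMod 7, t + 3 = t + 2 + 1) a)))
    ((h2 _).2 rfl).symm
    hw2.symm
    (hxn a)
    (hxn (a + 6))
    (hxn (a + 5))
    (hxn (a + 4))
    (hxn (a + 3))
    (hxn (a + 2))
    (fun hh => (by decide : ∀ t : ZMod 7, ¬(t + 6 = t)) a ((h1 _).1 hh))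
    (fun hh => (by decide : ∀ t : ZMod 7, ¬(t + 5 = t)) a ((h1 _).1 hh))
    (fun hh => (by decide : ∀ t : ZMod 7, ¬(t + 4 = t)) a ((h1 _).1 hh))
    (fun hh => (by decide : ∀ t : ZMod 7, ¬(t + 3 = t)) a ((h1 _).1 hh))
    (fun hh => (by decide : ∀ t : ZMod 7, ¬(t + 2 = t)) a ((h1 _).1 hh))
    hn12
    (fun hh => (by decide : ∀ t : ZMod 7, ¬(t = t + 5 + 1 ∨ t + 5 = t + 1)) a ((hc.2 _ _).1 hh))
    (fun hh => (by decide : ∀ t : ZMod 7, ¬(t = t + 4 + 1 ∨ t + 4 = t + 1)) a ((hc.2 _ _).1 hh))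
    (fun hh => (by decide : ∀ t : ZMod 7, ¬(t = t + 3 + 1 ∨ t + 3 = t + 1)) a ((hc.2 _ _).1 hh))
    (fun hh => (by decide : ∀ t : ZMod 7, ¬(t = t + 2 + 1 ∨ t + 2 = t + 1)) a ((hc.2 _ _).1 hh))
    (fun hh => (by decide : ∀ t : ZMod 7, ¬(t = t + 2)) a ((h2 _).1 hh.symm))
    (fun hh => (by decide : ∀ t : ZMod 7, ¬(t + 6 = t + 4 + 1 ∨ t + 4 = t + 6 + 1)) a ((hc.2 _ _).1 hh))
    (fun hh => (by decide : ∀ t : ZMod 7, ¬(t + 6 = t + 3 + 1 ∨ t + 3 = t + 6 + 1)) a ((hc.2 _ _).1 hh))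
    (fun hh => (by decide : ∀ t : ZMod 7, ¬(t + 6 = t + 2 + 1 ∨ t + 2 = t + 6 + 1)) a ((hc.2 _ _).1 hh))
    (fun hh => (by decide : ∀ t : ZMod 7, ¬(t + 6 = t + 2)) a ((h2 _).1 hh.symm))
    (fun hh => (by decide : ∀ t : ZMod 7, ¬(t + 5 = t + 3 + 1 ∨ t + 3 = t + 5 + 1)) a ((hc.2 _ _).1 hh))
    (fun hh => (by decide : ∀ t : ZMod 7, ¬(t + 5 = t + 2 + 1 ∨ t + 2 = t + 5 + 1)) a ((hc.2 _ _).1 hh))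
    (fun hh => (by decide : ∀ t : ZMod 7, ¬(t + 5 = t + 2)) a ((h2 _).1 hh.symm))
    (fun hh => (by decide : ∀ t : ZMod 7, ¬(t + 4 = t + 2 + 1 ∨ t + 2 = t + 4 + 1)) a ((hc.2 _ _).1 hh))
    (fun hh => (by decide : ∀ t : ZMod 7, ¬(t + 4 = t + 2)) a ((h2 _).1 hh.symm))
    (fun hh => (by decide : ∀ t : ZMod 7, ¬(t + 3 = t + 2)) a ((h2 _).1 hh.symm))

lemma exAB0 {V : Type*} {G : SimpleGraph V} (hodd : OddCyclesAre7 G)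
    {c : ZMod 7 → V} (hc : IsInducedCycle G 7 c) {x w1 w2 : V}
    (hxn : ∀ i, ¬ G.Adj x (c i)) (hw1 : G.Adj x w1) (hw2 : G.Adj x w2)
    (hn12 : ¬ G.Adj w1 w2) (a : ZMod 7)
    (h1 : ∀ j, G.Adj w1 (c j) ↔ j = a)
    (h2 : ∀ j, G.Adj w2 (c j) ↔ (j = a + 6 ∨ j = a + 1)) : False :=
  noC5 hodd
    hw1
    ((h1 _).2 rfl)
    ((hc.2 _ _).2 (Or.inr ((by decide : ∀ t : ZMod 7, t + 1 = t + 1) a)))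
    ((h2 _).2 (Or.inr rfl)).symm
    hw2.symm
    (hxn a)
    (hxn (a + 1))
    (fun hh => (by decide : ∀ t : ZMod 7, ¬(t + 1 = t)) a ((h1 _).1 hh))
    hn12
    (fun hh => (by decide : ∀ t : ZMod 7, ¬(t = t + 6 ∨ t = t + 1)) a ((h2 _).1 hh.symm))

lemma exAB2 {V : Type*} {G : SimpleGraph V} (hodd : OddCyclesAre7 G)
    {c : ZMod 7 → V} (hc : IsInducedCycle G 7 c) {x w1 w2 : V}
    (hxn : ∀ i, ¬ G.Adj x (c i)) (hw1 : G.Adj x w1) (hw2 : G.Adj x w2)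
    (hn12 : ¬ G.Adj w1 w2) (a : ZMod 7)
    (h1 : ∀ j, G.Adj w1 (c j) ↔ j = a)
    (h2 : ∀ j, G.Adj w2 (c j) ↔ (j = a + 1 ∨ j = a + 3)) : False :=
  noC5 hodd
    hw1
    ((h1 _).2 rfl)
    ((hc.2 _ _).2 (Or.inr ((by decide : ∀ t : ZMod 7, t + 1 = t + 1) a)))
    ((h2 _).2 (Or.inl rfl)).symm
    hw2.symm
    (hxn a)
    (hxn (a + 1))
    (fun hh => (by decide : ∀ t : ZMod 7, ¬(t + 1 = t)) a ((h1 _).1 hh))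
    hn12
    (fun hh => (by decide : ∀ t : ZMod 7, ¬(t = t + 1 ∨ t = t + 3)) a ((h2 _).1 hh.symm))

lemma exAB5 {V : Type*} {G : SimpleGraph V} (hodd : OddCyclesAre7 G)
    {c : ZMod 7 → V} (hc : IsInducedCycle G 7 c) {x w1 w2 : V}
    (hxn : ∀ i, ¬ G.Adj x (c i)) (hw1 : G.Adj x w1) (hw2 : G.Adj x w2)
    (hn12 : ¬ G.Adj w1 w2) (a : ZMod 7)
    (h1 : ∀ j, G.Adj w1 (c j) ↔ j = a)
    (h2 : ∀ j, G.Adj w2 (c j) ↔ (j = a + 4 ∨ j = a + 6)) : False :=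
  noC5 hodd
    hw1
    ((h1 _).2 rfl)
    ((hc.2 _ _).2 (Or.inl ((by decide : ∀ t : ZMod 7, t = t + 6 + 1) a)))
    ((h2 _).2 (Or.inr rfl)).symm
    hw2.symm
    (hxn a)
    (hxn (a + 6))
    (fun hh => (by decide : ∀ t : ZMod 7, ¬(t + 6 = t)) a ((h1 _).1 hh))
    hn12
    (fun hh => (by decide : ∀ t : ZMod 7, ¬(t = t + 4 ∨ t = t + 6)) a ((h2 _).1 hh.symm))

lemma exBB1 {V : Type*} {G : SimpleGraph V} (hodd : OddCyclesAre7 G)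
    {c : ZMod 7 → V} (hc : IsInducedCycle G 7 c) {x w1 w2 : V}
    (hxn : ∀ i, ¬ G.Adj x (c i)) (hw1 : G.Adj x w1) (hw2 : G.Adj x w2)
    (hn12 : ¬ G.Adj w1 w2) (a : ZMod 7)
    (h1 : ∀ j, G.Adj w1 (c j) ↔ (j = a + 6 ∨ j = a + 1))
    (h2 : ∀ j, G.Adj w2 (c j) ↔ (j = a ∨ j = a + 2)) : False :=
  noC5 hodd
    hw1
    ((h1 _).2 (Or.inr rfl))
    ((hc.2 _ _).2 (Or.inr ((by decide : ∀ t : ZMod 7, t + 2 = t + 1 + 1) a)))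
    ((h2 _).2 (Or.inr rfl)).symm
    hw2.symm
    (hxn (a + 1))
    (hxn (a + 2))
    (fun hh => (by decide : ∀ t : ZMod 7, ¬(t + 2 = t + 6 ∨ t + 2 = t + 1)) a ((h1 _).1 hh))
    hn12
    (fun hh => (by decide : ∀ t : ZMod 7, ¬(t + 1 = t ∨ t + 1 = t + 2)) a ((h2 _).1 hh.symm))

lemma exBB3 {V : Type*} {G : SimpleGraph V} (hodd : OddCyclesAre7 G)
    {c : ZMod 7 → V} (hc : IsInducedCycle G 7 c) {x w1 w2 : V}
    (hxn : ∀ i, ¬ G.Adj x (c i)) (hw1 : G.Adj x w1) (hw2 : G.Adj x w2)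
    (hn12 : ¬ G.Adj w1 w2) (a : ZMod 7)
    (h1 : ∀ j, G.Adj w1 (c j) ↔ (j = a + 6 ∨ j = a + 1))
    (h2 : ∀ j, G.Adj w2 (c j) ↔ (j = a + 2 ∨ j = a + 4)) : False :=
  noC5 hodd
    hw1
    ((h1 _).2 (Or.inr rfl))
    ((hc.2 _ _).2 (Or.inr ((by decide : ∀ t : ZMod 7, t + 2 = t + 1 + 1) a)))
    ((h2 _).2 (Or.inl rfl)).symm
    hw2.symm
    (hxn (a + 1))
    (hxn (a + 2))
    (fun hh => (by decide : ∀ t : ZMod 7, ¬(t + 2 = t + 6 ∨ t + 2 = t + 1)) a ((h1 _).1 hh))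
    hn12
    (fun hh => (by decide : ∀ t : ZMod 7, ¬(t + 1 = t + 2 ∨ t + 1 = t + 4)) a ((h2 _).1 hh.symm))

lemma classify {V : Type*} {G : SimpleGraph V} (hodd : OddCyclesAre7 G)
    {c : ZMod 7 → V} (hc : IsInducedCycle G 7 c) {w : V}
    (hwj : ∃ j, G.Adj w (c j)) :
    (∃ a, ∀ j, G.Adj w (c j) ↔ j = a) ∨
    (∃ b, ∀ j, G.Adj w (c j) ↔ (j = b + 6 ∨ j = b + 1)) := by
  obtain ⟨j0, hj0⟩ := hwj
  have step1 : ∀ j k : ZMod 7, k = j + 1 → G.Adj w (c j) → G.Adj w (c k) → False := by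
    intro j k hk h1 h2
    exact noC3 hodd h1 ((hc.2 j k).2 (Or.inr hk)) h2.symm
  have step2 : ∀ j k : ZMod 7, k = j + 3 → G.Adj w (c j) → G.Adj w (c k) → False := by
    intro j k hk h1 h2
    subst hk
    exact noC5 hodd h1 ((hc.2 _ _).2 (Or.inr rfl))
      ((hc.2 _ _).2 (Or.inr ((by decide : ∀ t : ZMod 7, t + 2 = t + 1 + 1) j)))
      ((hc.2 _ _).2 (Or.inr ((by decide : ∀ t : ZMod 7, t + 3 = t + 2 + 1) j)))
      h2.symm
      (fun h => step1 j (j+1) rfl h1 h)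
      (fun h => step1 (j+2) (j+3) ((by decide : ∀ t : ZMod 7, t + 3 = t + 2 + 1) j) h h2)
      (fun h => (by decide : ∀ t : ZMod 7, ¬(t = t + 2 + 1 ∨ t + 2 = t + 1)) j ((hc.2 _ _).1 h))
      (fun h => (by decide : ∀ t : ZMod 7, ¬(t = t + 3 + 1 ∨ t + 3 = t + 1)) j ((hc.2 _ _).1 h))
      (fun h => (by decide : ∀ t : ZMod 7, ¬(t + 1 = t + 3 + 1 ∨ t + 3 = t + 1 + 1)) j ((hc.2 _ _).1 h))
  have hdiff : ∀ j k, G.Adj w (c j) → G.Adj w (c k) → k = j ∨ k = j + 2 ∨ k = j + 5 := by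
    intro j k h1 h2
    have h7 : k = j + (k - j) := by ring
    rcases (by decide : ∀ d : ZMod 7, d = 0 ∨ d = 1 ∨ d = 2 ∨ d = 3 ∨ d = 4 ∨ d = 5 ∨ d = 6) (k - j)
      with hd|hd|hd|hd|hd|hd|hd <;> rw [hd] at h7 <;> subst h7
    · exact Or.inl ((by decide : ∀ t : ZMod 7, t + 0 = t) j)
    · exact (step1 j (j+1) rfl h1 h2).elim
    · exact Or.inr (Or.inl rfl)
    · exact (step2 j (j+3) rfl h1 h2).elim
    · exact (step2 (j+4) j ((by decide : ∀ t : ZMod 7, t = t + 4 + 3) j) h2 h1).elim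
    · exact Or.inr (Or.inr rfl)
    · exact (step1 (j+6) j ((by decide : ∀ t : ZMod 7, t = t + 6 + 1) j) h2 h1).elim
  by_cases h2nd : ∃ k, G.Adj w (c k) ∧ k ≠ j0
  · obtain ⟨k, hk, hkne⟩ := h2nd
    rcases hdiff j0 k hj0 hk with h|h|h
    · exact absurd h hkne
    · subst h
      refine Or.inr ⟨j0 + 1, fun j => ⟨fun hj => ?_, fun hj => ?_⟩⟩
      · exact (by decide : ∀ t u : ZMod 7, (u = t ∨ u = t + 2 ∨ u = t + 5) →
          (u = t + 2 ∨ u = t + 2 + 2 ∨ u = t + 2 + 5) → (u = t + 1 + 6 ∨ u = t + 1 + 1)) j0 j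
          (hdiff j0 j hj0 hj) (hdiff (j0+2) j hk hj)
      · rcases hj with rfl | rfl
        · rw [(by decide : ∀ t : ZMod 7, t + 1 + 6 = t) j0]; exact hj0
        · rw [(by decide : ∀ t : ZMod 7, t + 1 + 1 = t + 2) j0]; exact hk
    · subst h
      refine Or.inr ⟨j0 + 6, fun j => ⟨fun hj => ?_, fun hj => ?_⟩⟩
      · exact (by decide : ∀ t u : ZMod 7, (u = t ∨ u = t + 2 ∨ u = t + 5) →
          (u = t + 5 ∨ u = t + 5 + 2 ∨ u = t + 5 + 5) → (u = t + 6 + 6 ∨ u = t + 6 + 1)) j0 j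
          (hdiff j0 j hj0 hj) (hdiff (j0+5) j hk hj)
      · rcases hj with rfl | rfl
        · rw [(by decide : ∀ t : ZMod 7, t + 6 + 6 = t + 5) j0]; exact hk
        · rw [(by decide : ∀ t : ZMod 7, t + 6 + 1 = t) j0]; exact hj0
  · push_neg at h2nd
    exact Or.inl ⟨j0, fun j => ⟨fun hj => h2nd j hj, fun hj => hj ▸ hj0⟩⟩

def TA {V : Type*} (G : SimpleGraph V) (c : ZMod 7 → V) (x : V) (a : ZMod 7) : Prop :=
  ∃ w, G.Adj x w ∧ ∀ j, G.Adj w (c j) ↔ j = a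

def TB {V : Type*} (G : SimpleGraph V) (c : ZMod 7 → V) (x : V) (b : ZMod 7) : Prop :=
  ∃ w, G.Adj x w ∧ ∀ j, G.Adj w (c j) ↔ (j = b + 6 ∨ j = b + 1)

section pairs
variable {V : Type*} {G : SimpleGraph V} (hodd : OddCyclesAre7 G)
  {c : ZMod 7 → V} (hc : IsInducedCycle G 7 c) {x : V}
  (hxn : ∀ i, ¬ G.Adj x (c i))

include hodd hc hxn

lemma hAA : ∀ a a', TA G c x a → TA G c x a' → a' = a ∨ a' = a + 3 ∨ a' = a + 4 := by
  rintro a a' ⟨w1, hw1, h1⟩ ⟨w2, hw2, h2⟩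
  have hn : ¬ G.Adj w1 w2 := fun h => noC3 hodd hw1 h hw2.symm
  have hn' : ¬ G.Adj w2 w1 := fun h => hn h.symm
  rcases (by decide : ∀ t u : ZMod 7, u = t ∨ u = t+1 ∨ u = t+2 ∨ u = t+3 ∨ u = t+4 ∨ u = t+5 ∨ u = t+6) a a'
    with hd|hd|hd|hd|hd|hd|hd <;> subst hd
  · exact Or.inl rfl
  · exact (exAA1 hodd hc hxn hw1 hw2 hn a h1 h2).elim
  · exact (exAA2 hodd hc hxn hw1 hw2 hn a h1 h2).elim
  · exact Or.inr (Or.inl rfl)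
  · exact Or.inr (Or.inr rfl)
  · exact (exAA2 hodd hc hxn hw2 hw1 hn' (a+5) h2
      (by simp only [(by decide : ∀ t : ZMod 7, t + 5 + 2 = t) a]; exact h1)).elim
  · exact (exAA1 hodd hc hxn hw2 hw1 hn' (a+6) h2
      (by simp only [(by decide : ∀ t : ZMod 7, t + 6 + 1 = t) a]; exact h1)).elim

lemma hAB : ∀ a b, TA G c x a → TB G c x b → b = a + 1 ∨ b = a + 3 ∨ b = a + 4 ∨ b = a + 6 := by
  rintro a b ⟨w1, hw1, h1⟩ ⟨w2, hw2, h2⟩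
  have hn : ¬ G.Adj w1 w2 := fun h => noC3 hodd hw1 h hw2.symm
  rcases (by decide : ∀ t u : ZMod 7, u = t ∨ u = t+1 ∨ u = t+2 ∨ u = t+3 ∨ u = t+4 ∨ u = t+5 ∨ u = t+6) a b
    with hd|hd|hd|hd|hd|hd|hd <;> subst hd
  · exact (exAB0 hodd hc hxn hw1 hw2 hn b h1 h2).elim
  · exact Or.inl rfl
  · exact (exAB2 hodd hc hxn hw1 hw2 hn a h1
      (by simp only [(by decide : ∀ t : ZMod 7, t + 2 + 6 = t + 1) a,
        (by decide : ∀ t : ZMod 7, t + 2 + 1 = t + 3) a] at h2; exact h2)).elim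
  · exact Or.inr (Or.inl rfl)
  · exact Or.inr (Or.inr (Or.inl rfl))
  · exact (exAB5 hodd hc hxn hw1 hw2 hn a h1
      (by simp only [(by decide : ∀ t : ZMod 7, t + 5 + 6 = t + 4) a,
        (by decide : ∀ t : ZMod 7, t + 5 + 1 = t + 6) a] at h2; exact h2)).elim
  · exact Or.inr (Or.inr (Or.inr rfl))

lemma hBB : ∀ b b', TB G c x b → TB G c x b' → b' = b ∨ b' = b + 2 ∨ b' = b + 5 := by
  rintro b b' ⟨w1, hw1, h1⟩ ⟨w2, hw2, h2⟩
  have hn : ¬ G.Adj w1 w2 := fun h => noC3 hodd hw1 h hw2.symm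
  have hn' : ¬ G.Adj w2 w1 := fun h => hn h.symm
  rcases (by decide : ∀ t u : ZMod 7, u = t ∨ u = t+1 ∨ u = t+2 ∨ u = t+3 ∨ u = t+4 ∨ u = t+5 ∨ u = t+6) b b'
    with hd|hd|hd|hd|hd|hd|hd <;> subst hd
  · exact Or.inl rfl
  · exact (exBB1 hodd hc hxn hw1 hw2 hn b h1
      (by simp only [(by decide : ∀ t : ZMod 7, t + 1 + 6 = t) b,
        (by decide : ∀ t : ZMod 7, t + 1 + 1 = t + 2) b] at h2; exact h2)).elim
  · exact Or.inr (Or.inl rfl)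
  · exact (exBB3 hodd hc hxn hw1 hw2 hn b h1
      (by simp only [(by decide : ∀ t : ZMod 7, t + 3 + 6 = t + 2) b,
        (by decide : ∀ t : ZMod 7, t + 3 + 1 = t + 4) b] at h2; exact h2)).elim
  · exact (exBB3 hodd hc hxn hw2 hw1 hn' (b+4) h2
      (by simp only [(by decide : ∀ t : ZMod 7, t + 4 + 2 = t + 6) b,
        (by decide : ∀ t : ZMod 7, t + 4 + 4 = t + 1) b]; exact h1)).elim
  · exact Or.inr (Or.inr rfl)
  · exact (exBB1 hodd hc hxn hw2 hw1 hn' (b+6) h2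
      (by simp only [(by decide : ∀ t : ZMod 7, t + 6 + 2 = t + 1) b]; exact h1)).elim

end pairs

lemma memA {V : Type*} {G : SimpleGraph V} {c : ZMod 7 → V} {w : V} (a : ZMod 7)
    (hA : ∀ j, G.Adj w (c j) ↔ j = a) : w ∈ Aset G c a := by
  show G.neighborSet w ∩ Set.range c = {c a}
  ext y
  simp only [Set.mem_inter_iff, mem_neighborSet, Set.mem_range, Set.mem_singleton_iff]
  constructor
  · rintro ⟨hadj, i, rfl⟩; rw [(hA i).1 hadj]
  · rintro rfl; exact ⟨(hA a).2 rfl, a, rfl⟩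

lemma memB {V : Type*} {G : SimpleGraph V} {c : ZMod 7 → V} {w : V} (b : ZMod 7)
    (hB : ∀ j, G.Adj w (c j) ↔ (j = b + 6 ∨ j = b + 1)) : w ∈ Bset G c b := by
  show G.neighborSet w ∩ Set.range c = {c (b - 1), c (b + 1)}
  ext y
  simp only [Set.mem_inter_iff, mem_neighborSet, Set.mem_range, Set.mem_insert_iff,
    Set.mem_singleton_iff]
  constructor
  · rintro ⟨hadj, i, rfl⟩
    rcases (hB i).1 hadj with rfl | rfl
    · exact Or.inl (by rw [(by decide : ∀ t : ZMod 7, t + 6 = t - 1) b])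
    · exact Or.inr rfl
  · rintro (rfl | rfl)
    · exact ⟨(hB (b-1)).2 (Or.inl ((by decide : ∀ t : ZMod 7, t - 1 = t + 6) b)), _, rfl⟩
    · exact ⟨(hB (b+1)).2 (Or.inr rfl), _, rfl⟩


theorem stmt18 {V : Type*} [Fintype V] (G : SimpleGraph V)
    (hP : ¬ HasInducedPath G 10) (hodd : OddCyclesAre7 G)
    (hcomp : NoComparablePair G)
    (c : ZMod 7 → V) (hc : IsInducedCycle G 7 c)
    (x : V) (hx : distToCycle G c x = 2)
    (hiso : ∀ w : V, G.Adj x w → distToCycle G c w < 2) :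
    ∃ i : ZMod 7, ∀ w : V, G.Adj x w →
      w ∈ Aset G c (i - 2) ∨ w ∈ Bset G c (i - 1) ∨
      w ∈ Bset G c (i + 1) ∨ w ∈ Aset G c (i + 2) := by
  have hSne : ∀ y : V, Set.Nonempty {d : ℕ | ∃ i : ZMod 7, G.dist y (c i) = d} :=
    fun y => ⟨G.dist y (c 0), 0, rfl⟩
  rw [distToCycle] at hx
  have hmem : (2 : ℕ) ∈ {d : ℕ | ∃ i : ZMod 7, G.dist x (c i) = d} := hx ▸ Nat.sInf_mem (hSne x)
  obtain ⟨i0, hi0⟩ := hmem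
  have hge : ∀ i : ZMod 7, 2 ≤ G.dist x (c i) := fun i => hx ▸ Nat.sInf_le ⟨i, rfl⟩
  have hxne : ∀ i, x ≠ c i := by
    intro i h
    have := hge i
    rw [h, SimpleGraph.dist_self] at this
    omega
  have hxn : ∀ i, ¬ G.Adj x (c i) := by
    intro i h
    have h1 := SimpleGraph.dist_le h.toWalk
    have h2 := hge i
    simp only [SimpleGraph.Walk.length_cons, SimpleGraph.Walk.length_nil] at h1
    omega
  have hreach : ∀ i, G.Reachable x (c i) := fun i =>
    SimpleGraph.Reachable.of_dist_ne_zero (by have := hge i; omega)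
  -- every neighbor of x has an attachment on the cycle
  have hattach : ∀ w, G.Adj x w → ∃ j, G.Adj w (c j) := by
    intro w hw
    have hlt := hiso w hw
    rw [distToCycle] at hlt
    obtain ⟨j, hj⟩ := Nat.sInf_mem (hSne w)
    have h01 : sInf {d : ℕ | ∃ i : ZMod 7, G.dist w (c i) = d} = 0 ∨
        sInf {d : ℕ | ∃ i : ZMod 7, G.dist w (c i) = d} = 1 := by omega
    rcases h01 with h0 | h1
    · rw [h0] at hj
      have hr : G.Reachable w (c j) := (hw.symm.reachable).trans (hreach j)
      have : w = c j := hr.dist_eq_zero_iff.mp hj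
      exact absurd (this ▸ hw) (hxn j)
    · rw [h1] at hj
      exact ⟨j, SimpleGraph.dist_eq_one_iff_adj.mp hj⟩
  -- there is a neighbor
  obtain ⟨p, hp⟩ := (hreach i0).exists_walk_length_eq_dist
  rw [hi0] at hp
  have hw0 : ∃ w, G.Adj x w := by
    cases p with
    | nil => simp at hp
    | cons h q => exact ⟨_, h⟩
  obtain ⟨w0, hw0⟩ := hw0
  -- comparability killer
  have hcompM : ∀ m : ZMod 7, ¬ ∀ w, G.Adj x w → G.Adj w (c m) := by
    intro m hall
    refine hcomp x (c m) (hxne m) (hxn m) (Or.inl ?_)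
    intro y hy
    simp only [mem_neighborSet] at *
    exact (hall y hy).symm
  have hclass : ∀ w, G.Adj x w → (∃ a, ∀ j, G.Adj w (c j) ↔ j = a) ∨
      (∃ b, ∀ j, G.Adj w (c j) ↔ (j = b + 6 ∨ j = b + 1)) :=
    fun w hw => classify hodd hc (hattach w hw)
  have hAA' := hAA hodd hc hxn (x := x)
  have hAB' := hAB hodd hc hxn (x := x)
  have hBB' := hBB hodd hc hxn (x := x)
  -- finisher
  have finish : ∀ i : ZMod 7,
      (∀ a, TA G c x a → a = i - 2 ∨ a = i + 2) →
      (∀ b, TB G c x b → b = i - 1 ∨ b = i + 1) →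
      ∃ i : ZMod 7, ∀ w : V, G.Adj x w →
        w ∈ Aset G c (i - 2) ∨ w ∈ Bset G c (i - 1) ∨
        w ∈ Bset G c (i + 1) ∨ w ∈ Aset G c (i + 2) := by
    intro i hA hB
    refine ⟨i, fun w hw => ?_⟩
    rcases hclass w hw with ⟨a, ha⟩ | ⟨b, hb⟩
    · rcases hA a ⟨w, hw, ha⟩ with rfl | rfl
      · exact Or.inl (memA _ ha)
      · exact Or.inr (Or.inr (Or.inr (memA _ ha)))
    · rcases hB b ⟨w, hw, hb⟩ with rfl | rfl
      · exact Or.inr (Or.inl (memB _ hb))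
      · exact Or.inr (Or.inr (Or.inl (memB _ hb)))
  by_cases hExA : ∃ a, TA G c x a
  · obtain ⟨a, hTAa⟩ := hExA
    by_cases h4 : TA G c x (a + 4)
    · refine finish (a + 2) ?_ ?_
      · intro a'' hta
        exact (by decide : ∀ t u : ZMod 7, (u = t ∨ u = t + 3 ∨ u = t + 4) →
          (u = t + 4 ∨ u = t + 4 + 3 ∨ u = t + 4 + 4) → (u = t + 2 - 2 ∨ u = t + 2 + 2)) a a''
          (hAA' a a'' hTAa hta) (hAA' (a+4) a'' h4 hta)
      · intro b htb
        exact (by decide : ∀ t u : ZMod 7,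
          (u = t + 1 ∨ u = t + 3 ∨ u = t + 4 ∨ u = t + 6) →
          (u = t + 4 + 1 ∨ u = t + 4 + 3 ∨ u = t + 4 + 4 ∨ u = t + 4 + 6) →
          (u = t + 2 - 1 ∨ u = t + 2 + 1)) a b
          (hAB' a b hTAa htb) (hAB' (a+4) b h4 htb)
    by_cases h3 : TA G c x (a + 3)
    · refine finish (a + 5) ?_ ?_
      · intro a'' hta
        exact (by decide : ∀ t u : ZMod 7, (u = t ∨ u = t + 3 ∨ u = t + 4) →
          (u = t + 3 ∨ u = t + 3 + 3 ∨ u = t + 3 + 4) → (u = t + 5 - 2 ∨ u = t + 5 + 2)) a a''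
          (hAA' a a'' hTAa hta) (hAA' (a+3) a'' h3 hta)
      · intro b htb
        exact (by decide : ∀ t u : ZMod 7,
          (u = t + 1 ∨ u = t + 3 ∨ u = t + 4 ∨ u = t + 6) →
          (u = t + 3 + 1 ∨ u = t + 3 + 3 ∨ u = t + 3 + 4 ∨ u = t + 3 + 6) →
          (u = t + 5 - 1 ∨ u = t + 5 + 1)) a b
          (hAB' a b hTAa htb) (hAB' (a+3) b h3 htb)
    by_cases hB3 : TB G c x (a + 3)
    · refine finish (a + 2) ?_ ?_
      · intro a'' hta
        rcases hAA' a a'' hTAa hta with h | rfl | rfl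
        · exact Or.inl (h.trans ((by decide : ∀ t : ZMod 7, t = t + 2 - 2) a))
        · exact absurd hta h3
        · exact absurd hta h4
      · intro b htb
        exact (by decide : ∀ t u : ZMod 7,
          (u = t + 1 ∨ u = t + 3 ∨ u = t + 4 ∨ u = t + 6) →
          (u = t + 3 ∨ u = t + 3 + 2 ∨ u = t + 3 + 5) →
          (u = t + 2 - 1 ∨ u = t + 2 + 1)) a b
          (hAB' a b hTAa htb) (hBB' (a+3) b hB3 htb)
    by_cases hB4 : TB G c x (a + 4)
    · refine finish (a + 5) ?_ ?_
      · intro a'' hta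
        rcases hAA' a a'' hTAa hta with h | rfl | rfl
        · exact Or.inr (h.trans ((by decide : ∀ t : ZMod 7, t = t + 5 + 2) a))
        · exact absurd hta h3
        · exact absurd hta h4
      · intro b htb
        exact (by decide : ∀ t u : ZMod 7,
          (u = t + 1 ∨ u = t + 3 ∨ u = t + 4 ∨ u = t + 6) →
          (u = t + 4 ∨ u = t + 4 + 2 ∨ u = t + 4 + 5) →
          (u = t + 5 - 1 ∨ u = t + 5 + 1)) a b
          (hAB' a b hTAa htb) (hBB' (a+4) b hB4 htb)
    · exfalso
      apply hcompM a
      intro w hw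
      rcases hclass w hw with ⟨a'', ha''⟩ | ⟨b, hb⟩
      · rcases hAA' a a'' hTAa ⟨w, hw, ha''⟩ with h | rfl | rfl
        · exact (ha'' a).2 h.symm
        · exact absurd ⟨w, hw, ha''⟩ h3
        · exact absurd ⟨w, hw, ha''⟩ h4
      · rcases hAB' a b hTAa ⟨w, hw, hb⟩ with rfl | rfl | rfl | rfl
        · exact (hb a).2 (Or.inl ((by decide : ∀ t : ZMod 7, t = t + 1 + 6) a))
        · exact absurd ⟨w, hw, hb⟩ hB3
        · exact absurd ⟨w, hw, hb⟩ hB4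
        · exact (hb a).2 (Or.inr ((by decide : ∀ t : ZMod 7, t = t + 6 + 1) a))
  · -- all neighbors of type B
    have hTB0 : ∃ b, TB G c x b := by
      rcases hclass w0 hw0 with ⟨a, ha⟩ | ⟨b, hb⟩
      · exact absurd ⟨a, w0, hw0, ha⟩ hExA
      · exact ⟨b, w0, hw0, hb⟩
    obtain ⟨b0, hTB0⟩ := hTB0
    by_cases hB2 : TB G c x (b0 + 2)
    · refine finish (b0 + 1) ?_ ?_
      · intro a hta; exact absurd ⟨a, hta⟩ hExA
      · intro b htb
        exact (by decide : ∀ t u : ZMod 7, (u = t ∨ u = t + 2 ∨ u = t + 5) →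
          (u = t + 2 ∨ u = t + 2 + 2 ∨ u = t + 2 + 5) →
          (u = t + 1 - 1 ∨ u = t + 1 + 1)) b0 b
          (hBB' b0 b hTB0 htb) (hBB' (b0+2) b hB2 htb)
    by_cases hB5 : TB G c x (b0 + 5)
    · refine finish (b0 + 6) ?_ ?_
      · intro a hta; exact absurd ⟨a, hta⟩ hExA
      · intro b htb
        exact (by decide : ∀ t u : ZMod 7, (u = t ∨ u = t + 2 ∨ u = t + 5) →
          (u = t + 5 ∨ u = t + 5 + 2 ∨ u = t + 5 + 5) →
          (u = t + 6 - 1 ∨ u = t + 6 + 1)) b0 b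
          (hBB' b0 b hTB0 htb) (hBB' (b0+5) b hB5 htb)
    · exfalso
      apply hcompM (b0 + 1)
      intro w hw
      rcases hclass w hw with ⟨a, ha⟩ | ⟨b, hb⟩
      · exact absurd ⟨a, w, hw, ha⟩ hExA
      · rcases hBB' b0 b hTB0 ⟨w, hw, hb⟩ with h | rfl | rfl
        · exact (hb (b0+1)).2 (Or.inr (by rw [h]))
        · exact absurd ⟨w, hw, hb⟩ hB2
        · exact absurd ⟨w, hw, hb⟩ hB5
end

section
/- Let G be a graph with no induced C3 or C5 containing an induced 7-cycle C = v1-...-v7. Let x ∉ N[C] have neighbors r ∈ A_{i-2} ∪ B_{i-1} and s ∈ A_{i+2} ∪ B_{i+1}. Then x-r together with the path r to v_{i-2}, the path v_{i-2}-v_{i-3}-v_{i+3}-v_{i+2} along C, and v_{i+2} to s, s-x forms an induced 7-cycle C' = x-r-v_{i-2}-v_{i-3}-v_{i+3}-v_{i+2}-s-x in G, provided r and s are non-adjacent. -/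
open SimpleGraph

lemma mk7cycle {V : Type*} (G : SimpleGraph V) (w : ZMod 7 → V)
    (hinj : ∀ a b : ZMod 7, a ≠ b → w a ≠ w b)
    (he : ∀ a : ZMod 7, G.Adj (w a) (w (a + 1)))
    (hn : ∀ a b : ZMod 7, a ≠ b + 1 → b ≠ a + 1 → ¬ G.Adj (w a) (w b)) :
    IsInducedCycle G 7 w := by
  refine ⟨fun a b hab => by_contra fun hne => hinj a b hne hab, fun a b => ?_⟩
  constructor
  · intro h
    by_contra hR
    push_neg at hR
    exact hn a b hR.1 hR.2 h
  · rintro (h | h)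
    · subst h; exact (he b).symm
    · subst h; exact he a

theorem stmt19 {V : Type*} [Fintype V] (G : SimpleGraph V)
    (h3 : ¬ HasInducedCycle G 3) (h5 : ¬ HasInducedCycle G 5)
    (vC : ZMod 7 → V) (hc : IsInducedCycle G 7 vC) (i : ZMod 7)
    (x r s : V) (hx : x ∉ closedNbhd G vC)
    (hr : r ∈ Aset G vC (i - 2) ∪ Bset G vC (i - 1))
    (hs : s ∈ Aset G vC (i + 2) ∪ Bset G vC (i + 1))
    (hxr : G.Adj x r) (hxs : G.Adj x s) (hrs : ¬ G.Adj r s) :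
    ∃ c' : ZMod 7 → V, IsInducedCycle G 7 c' ∧
      c' 0 = x ∧ c' 1 = r ∧ c' 2 = vC (i - 2) ∧ c' 3 = vC (i - 3) ∧
      c' 4 = vC (i + 3) ∧ c' 5 = vC (i + 2) ∧ c' 6 = s := by
  obtain ⟨hcinj, hcadj⟩ := hc
  simp only [closedNbhd, Set.mem_union, Set.mem_setOf_eq, Set.mem_range, not_or,
    not_exists] at hx
  obtain ⟨hx1, hx2⟩ := hx
  -- facts about r
  have hrfact : G.Adj r (vC (i - 2)) ∧ ∀ j, j ≠ i - 2 → j ≠ i → ¬ G.Adj r (vC j) := by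
    cases hr with
    | inl ha =>
      have ha' : G.neighborSet r ∩ Set.range vC = {vC (i - 2)} := ha
      refine ⟨?_, ?_⟩
      · have h1 : vC (i - 2) ∈ G.neighborSet r ∩ Set.range vC := by rw [ha']; rfl
        exact h1.1
      · intro j hj1 _ hadj
        have h1 : vC j ∈ ({vC (i - 2)} : Set V) := by
          rw [← ha']; exact ⟨hadj, j, rfl⟩
        exact hj1 (hcinj h1)
    | inr hb =>
      have hb' : G.neighborSet r ∩ Set.range vC = {vC (i - 1 - 1), vC (i - 1 + 1)} := hb
      rw [(by decide : ∀ k : ZMod 7, k - 1 - 1 = k - 2) i,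
          (by decide : ∀ k : ZMod 7, k - 1 + 1 = k) i] at hb'
      refine ⟨?_, ?_⟩
      · have h1 : vC (i - 2) ∈ G.neighborSet r ∩ Set.range vC := by
          rw [hb']; exact Or.inl rfl
        exact h1.1
      · intro j hj1 hj2 hadj
        have h1 : vC j ∈ ({vC (i - 2), vC i} : Set V) := by
          rw [← hb']; exact ⟨hadj, j, rfl⟩
        cases h1 with
        | inl h => exact hj1 (hcinj h)
        | inr h => exact hj2 (hcinj h)
  obtain ⟨hrA, hrN⟩ := hrfact
  -- facts about s
  have hsfact : G.Adj s (vC (i + 2)) ∧ ∀ j, j ≠ i + 2 → j ≠ i → ¬ G.Adj s (vC j) := by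
    cases hs with
    | inl ha =>
      have ha' : G.neighborSet s ∩ Set.range vC = {vC (i + 2)} := ha
      refine ⟨?_, ?_⟩
      · have h1 : vC (i + 2) ∈ G.neighborSet s ∩ Set.range vC := by rw [ha']; rfl
        exact h1.1
      · intro j hj1 _ hadj
        have h1 : vC j ∈ ({vC (i + 2)} : Set V) := by
          rw [← ha']; exact ⟨hadj, j, rfl⟩
        exact hj1 (hcinj h1)
    | inr hb =>
      have hb' : G.neighborSet s ∩ Set.range vC = {vC (i + 1 - 1), vC (i + 1 + 1)} := hb
      rw [(by decide : ∀ k : ZMod 7, k + 1 - 1 = k) i,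
          (by decide : ∀ k : ZMod 7, k + 1 + 1 = k + 2) i] at hb'
      refine ⟨?_, ?_⟩
      · have h1 : vC (i + 2) ∈ G.neighborSet s ∩ Set.range vC := by
          rw [hb']; exact Or.inr rfl
        exact h1.1
      · intro j hj1 hj2 hadj
        have h1 : vC j ∈ ({vC i, vC (i + 2)} : Set V) := by
          rw [← hb']; exact ⟨hadj, j, rfl⟩
        cases h1 with
        | inl h => exact hj2 (hcinj h)
        | inr h => exact hj1 (hcinj h)
  obtain ⟨hsA, hsN⟩ := hsfact
  -- vertex distinctness
  have nx1 : x ≠ r := hxr.ne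
  have nx6 : x ≠ s := hxs.ne
  have nx2 : x ≠ vC (i - 2) := fun h => hx1 (i - 2) h.symm
  have nx3 : x ≠ vC (i - 3) := fun h => hx1 (i - 3) h.symm
  have nx4 : x ≠ vC (i + 3) := fun h => hx1 (i + 3) h.symm
  have nx5 : x ≠ vC (i + 2) := fun h => hx1 (i + 2) h.symm
  have nr2 : r ≠ vC (i - 2) := fun h => hx2 (i - 2) (h ▸ hxr)
  have nr3 : r ≠ vC (i - 3) := fun h => hx2 (i - 3) (h ▸ hxr)
  have nr4 : r ≠ vC (i + 3) := fun h => hx2 (i + 3) (h ▸ hxr)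
  have nr5 : r ≠ vC (i + 2) := fun h => hx2 (i + 2) (h ▸ hxr)
  have ns2 : s ≠ vC (i - 2) := fun h => hx2 (i - 2) (h ▸ hxs)
  have ns3 : s ≠ vC (i - 3) := fun h => hx2 (i - 3) (h ▸ hxs)
  have ns4 : s ≠ vC (i + 3) := fun h => hx2 (i + 3) (h ▸ hxs)
  have ns5 : s ≠ vC (i + 2) := fun h => hx2 (i + 2) (h ▸ hxs)
  have nrs6 : r ≠ s := fun h =>
    hsN (i - 2) ((by decide : ∀ k : ZMod 7, k - 2 ≠ k + 2) i)
      ((by decide : ∀ k : ZMod 7, k - 2 ≠ k) i) (h ▸ hrA)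
  have nc23 : vC (i - 2) ≠ vC (i - 3) := fun h =>
    ((by decide : ∀ k : ZMod 7, k - 2 ≠ k - 3) i) (hcinj h)
  have nc24 : vC (i - 2) ≠ vC (i + 3) := fun h =>
    ((by decide : ∀ k : ZMod 7, k - 2 ≠ k + 3) i) (hcinj h)
  have nc25 : vC (i - 2) ≠ vC (i + 2) := fun h =>
    ((by decide : ∀ k : ZMod 7, k - 2 ≠ k + 2) i) (hcinj h)
  have nc34 : vC (i - 3) ≠ vC (i + 3) := fun h =>
    ((by decide : ∀ k : ZMod 7, k - 3 ≠ k + 3) i) (hcinj h)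
  have nc35 : vC (i - 3) ≠ vC (i + 2) := fun h =>
    ((by decide : ∀ k : ZMod 7, k - 3 ≠ k + 2) i) (hcinj h)
  have nc45 : vC (i + 3) ≠ vC (i + 2) := fun h =>
    ((by decide : ∀ k : ZMod 7, k + 3 ≠ k + 2) i) (hcinj h)
  -- cycle edges
  have ec1 : G.Adj (vC (i - 2)) (vC (i - 3)) :=
    (hcadj _ _).mpr (Or.inl ((by decide : ∀ k : ZMod 7, k - 2 = k - 3 + 1) i))
  have ec2 : G.Adj (vC (i - 3)) (vC (i + 3)) :=
    (hcadj _ _).mpr (Or.inl ((by decide : ∀ k : ZMod 7, k - 3 = k + 3 + 1) i))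
  have ec3 : G.Adj (vC (i + 3)) (vC (i + 2)) :=
    (hcadj _ _).mpr (Or.inl ((by decide : ∀ k : ZMod 7, k + 3 = k + 2 + 1) i))
  -- non-edges
  have m02 : ¬ G.Adj x (vC (i - 2)) := hx2 _
  have m03 : ¬ G.Adj x (vC (i - 3)) := hx2 _
  have m04 : ¬ G.Adj x (vC (i + 3)) := hx2 _
  have m05 : ¬ G.Adj x (vC (i + 2)) := hx2 _
  have m13 : ¬ G.Adj r (vC (i - 3)) :=
    hrN _ ((by decide : ∀ k : ZMod 7, k - 3 ≠ k - 2) i)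
      ((by decide : ∀ k : ZMod 7, k - 3 ≠ k) i)
  have m14 : ¬ G.Adj r (vC (i + 3)) :=
    hrN _ ((by decide : ∀ k : ZMod 7, k + 3 ≠ k - 2) i)
      ((by decide : ∀ k : ZMod 7, k + 3 ≠ k) i)
  have m15 : ¬ G.Adj r (vC (i + 2)) :=
    hrN _ ((by decide : ∀ k : ZMod 7, k + 2 ≠ k - 2) i)
      ((by decide : ∀ k : ZMod 7, k + 2 ≠ k) i)
  have m62 : ¬ G.Adj s (vC (i - 2)) :=
    hsN _ ((by decide : ∀ k : ZMod 7, k - 2 ≠ k + 2) i)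
      ((by decide : ∀ k : ZMod 7, k - 2 ≠ k) i)
  have m63 : ¬ G.Adj s (vC (i - 3)) :=
    hsN _ ((by decide : ∀ k : ZMod 7, k - 3 ≠ k + 2) i)
      ((by decide : ∀ k : ZMod 7, k - 3 ≠ k) i)
  have m64 : ¬ G.Adj s (vC (i + 3)) :=
    hsN _ ((by decide : ∀ k : ZMod 7, k + 3 ≠ k + 2) i)
      ((by decide : ∀ k : ZMod 7, k + 3 ≠ k) i)
  have m24 : ¬ G.Adj (vC (i - 2)) (vC (i + 3)) := fun h =>
    ((by decide : ∀ k : ZMod 7, ¬(k - 2 = k + 3 + 1 ∨ k + 3 = k - 2 + 1)) i) ((hcadj _ _).mp h)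
  have m25 : ¬ G.Adj (vC (i - 2)) (vC (i + 2)) := fun h =>
    ((by decide : ∀ k : ZMod 7, ¬(k - 2 = k + 2 + 1 ∨ k + 2 = k - 2 + 1)) i) ((hcadj _ _).mp h)
  have m35 : ¬ G.Adj (vC (i - 3)) (vC (i + 2)) := fun h =>
    ((by decide : ∀ k : ZMod 7, ¬(k - 3 = k + 2 + 1 ∨ k + 2 = k - 3 + 1)) i) ((hcadj _ _).mp h)
  -- symmetric versions
  have m20 : ¬ G.Adj (vC (i - 2)) x := fun h => m02 h.symm
  have m30 : ¬ G.Adj (vC (i - 3)) x := fun h => m03 h.symm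
  have m40 : ¬ G.Adj (vC (i + 3)) x := fun h => m04 h.symm
  have m50 : ¬ G.Adj (vC (i + 2)) x := fun h => m05 h.symm
  have m31 : ¬ G.Adj (vC (i - 3)) r := fun h => m13 h.symm
  have m41 : ¬ G.Adj (vC (i + 3)) r := fun h => m14 h.symm
  have m51 : ¬ G.Adj (vC (i + 2)) r := fun h => m15 h.symm
  have m26 : ¬ G.Adj (vC (i - 2)) s := fun h => m62 h.symm
  have m36 : ¬ G.Adj (vC (i - 3)) s := fun h => m63 h.symm
  have m46 : ¬ G.Adj (vC (i + 3)) s := fun h => m64 h.symm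
  have m42 : ¬ G.Adj (vC (i + 3)) (vC (i - 2)) := fun h => m24 h.symm
  have m52 : ¬ G.Adj (vC (i + 2)) (vC (i - 2)) := fun h => m25 h.symm
  have m53 : ¬ G.Adj (vC (i + 2)) (vC (i - 3)) := fun h => m35 h.symm
  have m61 : ¬ G.Adj s r := fun h => hrs h.symm
  -- edges in both directions
  have e10 : G.Adj r x := hxr.symm
  have e21 : G.Adj (vC (i - 2)) r := hrA.symm
  have e32 : G.Adj (vC (i - 3)) (vC (i - 2)) := ec1.symm
  have e43 : G.Adj (vC (i + 3)) (vC (i - 3)) := ec2.symm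
  have e54 : G.Adj (vC (i + 2)) (vC (i + 3)) := ec3.symm
  have e56 : G.Adj (vC (i + 2)) s := hsA.symm
  have e65 : G.Adj s (vC (i + 2)) := hsA
  have e60 : G.Adj s x := hxs.symm
  have e06 : G.Adj x s := hxs
  -- the new cycle
  refine ⟨fun j : ZMod 7 =>
      if j = 0 then x else if j = 1 then r else if j = 2 then vC (i - 2) else
      if j = 3 then vC (i - 3) else if j = 4 then vC (i + 3) else
      if j = 5 then vC (i + 2) else s,
    mk7cycle G _ ?_ ?_ ?_, rfl, rfl, rfl, rfl, rfl, rfl, rfl⟩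
  · intro a b hab
    fin_cases a <;> fin_cases b <;>
      first
        | exact absurd rfl hab
        | assumption
        | exact Ne.symm (by assumption)
  · intro a
    fin_cases a <;> assumption
  · intro a b h1 h2
    fin_cases a <;> fin_cases b <;>
      first
        | exact absurd rfl h1
        | exact absurd rfl h2
        | exact G.irrefl
        | assumption
end
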